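/- Let Σ ⊂ ℝⁿ be a compact smooth embedded k-dimensional submanifold without boundary and let (p,q) : [0,T) → Σ × Σ be a chord shortening flow relative to Σ. Then (1/2) d/dt ‖η^T‖² = −(ℓ/2) ‖Δ^{1/2} η^T‖² + (1/ℓ) ‖η^T‖⁴ − ⟨A(η^T(p), η^T(p)), η(p)⟩ − ⟨A(η^T(q), η^T(q)), η(q)⟩, where ‖Δ^{1/2} η^T‖² = 2|η^T(p) − η^T(q)|²/ℓ². -/

import Mathlib

open scoped RealInnerProductSpace ENNReal
open Set Filter

noncomputable section

/-- Euclidean `n`-space. -/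
abbrev Euc (n : ℕ) := EuclideanSpace ℝ (Fin n)

/-- The orthogonal projection `π_K` onto a submodule `K`, as a map `Euc n → Euc n`. -/
def projSM {n : ℕ} (K : Submodule ℝ (Euc n)) (v : Euc n) : Euc n :=
  (K.orthogonalProjectionOnto v : Euc n)

/-- `S` is a smooth embedded `k`-dimensional submanifold (without boundary) of `ℝⁿ`,
whose tangent space at each `x ∈ S` is the `k`-dimensional subspace `T x ⊆ ℝⁿ`:
every point of `S` has a neighbourhood in `S` which is the image of a smooth injective
parametrization, which is a homeomorphism onto its image, with injective differential whose
range is the assigned tangent space. -/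
def IsSubmanifold (n k : ℕ) (S : Set (Euc n)) (T : Euc n → Submodule ℝ (Euc n)) : Prop :=
  ∀ x ∈ S, ∃ (f : Euc k → Euc n) (u : Set (Euc k)) (v : Set (Euc n)),
    IsOpen u ∧ IsOpen v ∧ x ∈ v ∧ ContDiffOn ℝ (⊤ : ℕ∞) f u ∧ Set.InjOn f u ∧
    f '' u = S ∩ v ∧
    (∀ s ⊆ u, IsOpen s → ∃ w : Set (Euc n), IsOpen w ∧ f '' s = S ∩ w) ∧
    ∀ y ∈ u, Function.Injective (fderiv ℝ f y) ∧
      LinearMap.range ((fderiv ℝ f y) : Euc k →ₗ[ℝ] Euc n) = T (f y)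

/-- The tangential part `η^T(x) = π_{T x}((x - y)/|x - y|)` of the outward unit conormal at `x`
of the chord from `x` to `y`. -/
def conormalT {n : ℕ} (T : Euc n → Submodule ℝ (Euc n)) (x y : Euc n) : Euc n :=
  projSM (T x) (‖x - y‖⁻¹ • (x - y))

/-- A chord shortening flow relative to `S` (with tangent spaces `T`) on the time domain `dom`:
a pair of C¹ curves `p q : dom → S` with `p t ≠ q t`, satisfying
`p' = -π_{p}((p-q)/|p-q|)` and `q' = -π_{q}((q-p)/|q-p|)`. -/
def IsCSFOn {n : ℕ} (S : Set (Euc n)) (T : Euc n → Submodule ℝ (Euc n))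
    (dom : Set ℝ) (p q : ℝ → Euc n) : Prop :=
  ∀ t ∈ dom, p t ∈ S ∧ q t ∈ S ∧ p t ≠ q t ∧
    HasDerivWithinAt p (-(conormalT T (p t) (q t))) dom t ∧
    HasDerivWithinAt q (-(conormalT T (q t) (p t))) dom t

/-- The time interval `[0, Tm)` (where possibly `Tm = ∞`). -/
def csfDomain (Tm : ℝ≥0∞) : Set ℝ := {t : ℝ | 0 ≤ t ∧ ENNReal.ofReal t < Tm}

/-- A maximal chord shortening flow: one defined on `[0, Tm)` which cannot be extended to a
chord shortening flow on a strictly larger interval `[0, Tm')`. -/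
def IsMaximalCSF {n : ℕ} (S : Set (Euc n)) (T : Euc n → Submodule ℝ (Euc n))
    (Tm : ℝ≥0∞) (p q : ℝ → Euc n) : Prop :=
  IsCSFOn S T (csfDomain Tm) p q ∧
  ∀ Tm' : ℝ≥0∞, Tm < Tm' → ∀ p' q' : ℝ → Euc n,
    IsCSFOn S T (csfDomain Tm') p' q' →
    ¬ (∀ t ∈ csfDomain Tm, p' t = p t ∧ q' t = q t)

/-! Near each point of `S`, composing the Gram formula `B (B*B)⁻¹ B*` for the projection
onto `range B` with the differential of a chart and with a smooth local left inverse of that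
chart gives a smooth extension `P` of `x ↦ π_x` to an open set of `ℝⁿ`. Along a curve `γ` in
`S`, differentiating `P² = P` and `P* = P` shows that `L = (P ∘ γ)'` is symmetric with
`PLP = 0`, while `A(v, a) = (1 - P) DP(v) a`; hence
`(‖π_γ w‖²)' = 2⟨A(γ', π_γ w), w⟩ + 2⟨π_γ w, w'⟩`.
For `γ = p` and `w = (p - q)/ℓ`, whose derivative is `(c' - ⟨w, c'⟩ w)/ℓ` with
`c' = η^T(q) - η^T(p)`, and symmetrically at `q`, the sum is the stated identity. -/

open Metric ContinuousLinearMap Topology Function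

lemma real_inner_starProjection_self {E : Type*} [NormedAddCommGroup E] [InnerProductSpace ℝ E]
    (K : Submodule ℝ E) [K.HasOrthogonalProjection] (v : E) :
    ⟪v, K.starProjection v⟫ = ‖K.starProjection v‖ ^ 2 := by
  rw [← real_inner_self_eq_norm_sq, Submodule.inner_starProjection_left_eq_right,
    K.starProjection_eq_self_iff.2 (K.starProjection_apply_mem v)]

section RangeProjection

variable {E F : Type*} [NormedAddCommGroup E] [InnerProductSpace ℝ E]
  [NormedAddCommGroup F] [InnerProductSpace ℝ F]

lemma isUnit_adjoint_comp_self [FiniteDimensional ℝ E] [CompleteSpace F] {B : E →L[ℝ] F}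
    (hB : Injective B) : IsUnit (adjoint B ∘L B) := by
  rw [isUnit_iff_isUnit_toLinearMap, LinearMap.isUnit_iff_ker_eq_bot]
  exact (ker_adjoint_comp_self B).trans (LinearMap.ker_eq_bot.2 hB)

def rangeProj [CompleteSpace E] [CompleteSpace F] (B : E →L[ℝ] F) : F →L[ℝ] F :=
  B ∘L Ring.inverse (adjoint B ∘L B) ∘L adjoint B

lemma rangeProj_eq_starProjection [FiniteDimensional ℝ E] [CompleteSpace F] {B : E →L[ℝ] F}
    (hB : Injective B) : rangeProj B = B.range.starProjection := by
  obtain ⟨G, hG⟩ := isUnit_adjoint_comp_self hB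
  ext w
  symm
  refine Submodule.eq_starProjection_of_mem_orthogonal ⟨_, rfl⟩ ?_
  rintro _ ⟨ζ, rfl⟩
  have hBadj : adjoint B (B (Ring.inverse (adjoint B ∘L B) (adjoint B w))) = adjoint B w := by
    have h : (G : E →L[ℝ] E) (Ring.inverse (G : E →L[ℝ] E) (adjoint B w)) = adjoint B w := by
      rw [Ring.inverse_unit, ← mul_apply_eq_comp, Units.mul_inv]; rfl
    rwa [hG] at h
  rw [coe_coe, inner_sub_right, ← adjoint_inner_right, ← adjoint_inner_right]
  simp [rangeProj, hBadj]

lemma isBoundedLinearMap_adjoint [CompleteSpace E] [CompleteSpace F] :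
    IsBoundedLinearMap ℝ (adjoint : (E →L[ℝ] F) → F →L[ℝ] E) :=
  ⟨⟨map_add adjoint, fun c B => by simp⟩, 1, one_pos, fun B => by simp⟩

lemma contDiff_adjoint [CompleteSpace E] [CompleteSpace F] {m : WithTop ℕ∞} :
    ContDiff ℝ m (adjoint : (E →L[ℝ] F) → F →L[ℝ] E) :=
  isBoundedLinearMap_adjoint.contDiff

lemma contDiffAt_rangeProj [FiniteDimensional ℝ E] [CompleteSpace F] {m : WithTop ℕ∞}
    {B : E →L[ℝ] F} (hB : Injective B) :
    ContDiffAt ℝ m (fun C : E →L[ℝ] F => rangeProj C) B := by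
  obtain ⟨G, hG⟩ := isUnit_adjoint_comp_self hB
  have hgram : ContDiffAt ℝ m (fun C : E →L[ℝ] F => adjoint C ∘L C) B :=
    (contDiff_adjoint.clm_comp contDiff_id).contDiffAt
  have hinv : ContDiffAt ℝ m (fun C : E →L[ℝ] F => Ring.inverse (adjoint C ∘L C)) B :=
    ContDiffAt.comp (g := Ring.inverse) B (hG ▸ contDiffAt_ringInverse ℝ G) hgram
  exact (contDiffAt_id.clm_comp hinv).clm_comp contDiff_adjoint.contDiffAt

end RangeProjection

section LocalLeftInverse

variable {E F : Type*} [NormedAddCommGroup E] [NormedSpace ℝ E] [FiniteDimensional ℝ E]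
  [NormedAddCommGroup F] [InnerProductSpace ℝ F] [FiniteDimensional ℝ F]

lemma exists_contDiffAt_leftInverse {f : E → F} {c : E} {m : WithTop ℕ∞}
    (hf : ContDiffAt ℝ m f c) (hm : m ≠ 0) (hinj : Injective (fderiv ℝ f c)) :
    ∃ g : F → E, ContDiffAt ℝ m g (f c) ∧ ∀ᶠ y in 𝓝 c, g (f y) = y := by
  set B := fderiv ℝ f c
  set K := B.range
  -- `Φ (y, w) = f y + w` has invertible derivative at `(c, 0)`; the first component of its
  -- local inverse is a left inverse of `f`.
  let e : (E × Kᗮ) ≃L[ℝ] F :=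
    ((LinearEquiv.ofInjective (B : E →ₗ[ℝ] F) hinj).prodCongr (LinearEquiv.refl ℝ Kᗮ) ≪≫ₗ
      K.prodEquivOfIsCompl Kᗮ K.isCompl_orthogonal).toContinuousLinearEquiv
  let Φ : E × Kᗮ → F := fun yw => f yw.1 + yw.2
  have hΦ : ContDiffAt ℝ m Φ (c, 0) :=
    (hf.comp _ contDiffAt_fst).add (Kᗮ.subtypeL.contDiff.comp contDiff_snd).contDiffAt
  have hΦ' : HasFDerivAt Φ (e : E × Kᗮ →L[ℝ] F) (c, 0) :=
    (((hf.differentiableAt hm).hasFDerivAt.comp (c, (0 : Kᗮ)) hasFDerivAt_fst).add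
      (Kᗮ.subtypeL.comp (snd ℝ E Kᗮ)).hasFDerivAt).congr_fderiv (by ext <;> rfl)
  have hΦ_slice (y : E) : Φ (y, 0) = f y := by simp [Φ]
  refine ⟨Prod.fst ∘ hΦ.localInverse hΦ' hm, ?_, ?_⟩
  · exact hΦ_slice c ▸ contDiffAt_fst.comp _ (hΦ.to_localInverse hΦ' hm)
  · have hslice : Tendsto (fun y => (y, (0 : Kᗮ))) (𝓝 c) (𝓝 (c, 0)) :=
      (continuous_id.prodMk continuous_const).tendsto c
    filter_upwards [hslice.eventually (hΦ.hasStrictFDerivAt' hΦ' hm).eventually_left_inverse]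
      with y hy
    rw [comp_apply, ← hΦ_slice]
    exact congrArg Prod.fst hy

end LocalLeftInverse

section ProjectionFamily

variable {s : Set ℝ} {t : ℝ}

lemma HasDerivWithinAt.isSelfAdjoint_of_eventually {E : Type*} [NormedAddCommGroup E]
    [InnerProductSpace ℝ E] [CompleteSpace E] {M : ℝ → E →L[ℝ] E} {L : E →L[ℝ] E}
    (hM : HasDerivWithinAt M L s t) (hs : UniqueDiffWithinAt ℝ s t) (ht : t ∈ s)
    (hsa : ∀ᶠ τ in 𝓝[s] t, IsSelfAdjoint (M τ)) : IsSelfAdjoint L := by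
  have hadj : HasDerivWithinAt (fun τ => adjoint (M τ)) (adjoint L) s t :=
    isBoundedLinearMap_adjoint.hasFDerivAt.comp_hasDerivWithinAt t hM
  have hM' : HasDerivWithinAt M (adjoint L) s t :=
    hadj.congr_of_eventuallyEq (hsa.mono fun τ h => h.symm) (hsa.self_of_nhdsWithin ht).symm
  exact hs.eq_deriv _ hM' hM

lemma HasDerivWithinAt.mul_mul_eq_zero_of_eventually {E : Type*} [NormedAddCommGroup E]
    [NormedSpace ℝ E] {M : ℝ → E →L[ℝ] E} {L : E →L[ℝ] E}
    (hM : HasDerivWithinAt M L s t) (hs : UniqueDiffWithinAt ℝ s t) (ht : t ∈ s)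
    (hidem : ∀ᶠ τ in 𝓝[s] t, IsIdempotentElem (M τ)) : M t * L * M t = 0 := by
  have hsq : HasDerivWithinAt (fun τ => M τ * M τ) (L * M t + M t * L) s t := hM.clm_comp hM
  have hM' : HasDerivWithinAt M (L * M t + M t * L) s t :=
    hsq.congr_of_eventuallyEq (hidem.mono fun τ h => h.eq.symm)
      (hidem.self_of_nhdsWithin ht).eq.symm
  have hLeib : L * M t + M t * L = L := hs.eq_deriv _ hM' hM
  have hMt : M t * M t = M t := (hidem.self_of_nhdsWithin ht).eq
  calc M t * L * M t = M t * (L * M t + M t * L) - M t * M t * L := by noncomm_ring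
    _ = 0 := by rw [hLeib, hMt, sub_self]

end ProjectionFamily

theorem HasDerivWithinAt.normalize {F : Type*} [NormedAddCommGroup F] [InnerProductSpace ℝ F]
    {c : ℝ → F} {c' : F} {s : Set ℝ} {t : ℝ} (hc : HasDerivWithinAt c c' s t) (h0 : c t ≠ 0) :
    HasDerivWithinAt (fun τ => NormedSpace.normalize (c τ))
      (‖c t‖⁻¹ • (c' - ⟪NormedSpace.normalize (c t), c'⟫ • NormedSpace.normalize (c t)))
      s t := by
  have hnorm0 : ‖c t‖ ≠ 0 := norm_ne_zero_iff.2 h0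
  have hnorm : HasDerivWithinAt (fun τ => ‖c τ‖) (‖c t‖⁻¹ * ⟪c t, c'⟫) s t := by
    have := hc.norm_sq.sqrt (pow_ne_zero 2 hnorm0)
    simp only [Real.sqrt_sq (norm_nonneg _)] at this
    convert this using 1
    field_simp
  convert (hnorm.inv hnorm0).smul hc using 1
  · rfl
  · simp only [NormedSpace.normalize, Pi.inv_apply, real_inner_smul_left, smul_sub,
      smul_smul]
    rw [sub_eq_add_neg, ← neg_smul]
    congr 2
    field_simp

section Submanifold

variable {n k : ℕ} {S : Set (Euc n)} {T : Euc n → Submodule ℝ (Euc n)}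
  {A : Euc n → Euc n → Euc n → Euc n} {s : Set ℝ} {t : ℝ}

lemma IsSubmanifold.exists_contDiffAt_starProjection (hsub : IsSubmanifold n k S T)
    {x : Euc n} (hx : x ∈ S) :
    ∃ P : Euc n → Euc n →L[ℝ] Euc n,
      ContDiffAt ℝ (⊤ : ℕ∞) P x ∧ ∀ᶠ z in 𝓝[S] x, P z = (T z).starProjection := by
  obtain ⟨f, u, v, hu, -, hxv, hf, -, himg, hopen, hder⟩ := hsub x hx
  obtain ⟨c, hcu, rfl⟩ : x ∈ f '' u := himg ▸ ⟨hx, hxv⟩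
  obtain ⟨g, hg, hgf⟩ :=
    exists_contDiffAt_leftInverse (hf.contDiffAt (hu.mem_nhds hcu)) (by simp) (hder c hcu).1
  have hgc : g (f c) = c := hgf.self_of_nhds
  have hdf : ContDiffAt ℝ (⊤ : ℕ∞) (fderiv ℝ f) (g (f c)) := by
    rw [hgc]
    exact (hf.fderiv_of_isOpen hu (by simp)).contDiffAt (hu.mem_nhds hcu)
  refine ⟨fun z => rangeProj (fderiv ℝ f (g z)), ?_, ?_⟩
  · refine ContDiffAt.comp (g := fun C => rangeProj C) _ ?_ (hdf.comp _ hg)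
    rw [hgc]
    exact contDiffAt_rangeProj (hder c hcu).1
  · obtain ⟨δ, hδ, hball⟩ := Metric.mem_nhds_iff.1 (inter_mem (hu.mem_nhds hcu) hgf)
    obtain ⟨w, hw, hws⟩ := hopen (ball c δ) (fun y hy => (hball hy).1) isOpen_ball
    have hcw : f c ∈ w := (hws.subset ⟨c, mem_ball_self hδ, rfl⟩).2
    filter_upwards [inter_mem_nhdsWithin S (hw.mem_nhds hcw)] with z ⟨hzS, hzw⟩
    obtain ⟨y, hy, rfl⟩ : z ∈ f '' ball c δ := hws ▸ ⟨hzS, hzw⟩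
    obtain ⟨hyu, hgy : g (f y) = y⟩ := hball hy
    rw [hgy, rangeProj_eq_starProjection (hder y hyu).1, ← (hder y hyu).2]

def IsSecondFundamentalForm (S : Set (Euc n)) (T : Euc n → Submodule ℝ (Euc n))
    (A : Euc n → Euc n → Euc n → Euc n) : Prop :=
  ∀ x ∈ S, ∀ u v : Euc n, u ∈ T x → v ∈ T x →
    ∀ V : Euc n → Euc n, DifferentiableAt ℝ V x → (∀ y ∈ S, V y ∈ T y) → V x = v →
      A x u v = fderiv ℝ V x u - projSM (T x) (fderiv ℝ V x u)

lemma IsSecondFundamentalForm.eq_fderiv_starProjection (hA : IsSecondFundamentalForm S T A)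
    {x : Euc n} (hx : x ∈ S) {P : Euc n → Euc n →L[ℝ] Euc n} (hP : DifferentiableAt ℝ P x)
    (hPS : ∀ᶠ z in 𝓝[S] x, P z = (T z).starProjection) {u v : Euc n}
    (hu : u ∈ T x) (hv : v ∈ T x) :
    A x u v = fderiv ℝ P x u v - (T x).starProjection (fderiv ℝ P x u v) := by
  obtain ⟨ε, hε, hball⟩ := Metric.mem_nhdsWithin_iff.1 hPS
  -- `χ • P (·) v` is tangent along all of `S` and agrees with `P (·) v` near `x`.
  let χ : ContDiffBump x := ⟨ε / 2, ε, half_pos hε, half_lt_self hε⟩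
  let V : Euc n → Euc n := fun z => χ z • P z v
  have hPv : DifferentiableAt ℝ (fun z => P z v) x := hP.clm_apply (differentiableAt_const v)
  have hVPv : V =ᶠ[𝓝 x] fun z => P z v :=
    χ.eventuallyEq_one.mono fun z hz => by simp [V, hz]
  have hVT : ∀ y ∈ S, V y ∈ T y := by
    intro y hy
    by_cases hyε : y ∈ ball x ε
    · simp only [V, show P y = _ from hball ⟨hyε, hy⟩]
      exact Submodule.smul_mem _ _ (Submodule.starProjection_apply_mem _ _)
    · simp [V, χ.zero_of_le_dist (not_lt.1 hyε)]
  have hVx : V x = v := by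
    simp [V, χ.one_of_mem_closedBall (mem_closedBall_self χ.rIn_pos.le),
      show P x = _ from hball ⟨mem_ball_self hε, hx⟩,
      Submodule.starProjection_eq_self_iff.2 hv]
  rw [hA x hx u v hu hv V (hPv.congr_of_eventuallyEq hVPv) hVT hVx, hVPv.fderiv_eq,
    fderiv_clm_apply hP (differentiableAt_const v)]
  simp [projSM]

lemma IsSecondFundamentalForm.neg_left (hA : IsSecondFundamentalForm S T A)
    (hsub : IsSubmanifold n k S T) {x : Euc n} (hx : x ∈ S) {u v : Euc n} (hu : u ∈ T x)
    (hv : v ∈ T x) : A x (-u) v = -A x u v := by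
  obtain ⟨P, hPx, hPS⟩ := hsub.exists_contDiffAt_starProjection hx
  have hP : DifferentiableAt ℝ P x := hPx.differentiableAt (by simp)
  rw [hA.eq_fderiv_starProjection hx hP hPS (neg_mem hu) hv,
    hA.eq_fderiv_starProjection hx hP hPS hu hv]
  simp only [map_neg, neg_apply, neg_sub_neg, neg_sub]

lemma IsSecondFundamentalForm.hasDerivWithinAt_norm_starProjection_sq
    (hA : IsSecondFundamentalForm S T A) (hsub : IsSubmanifold n k S T) {γ w : ℝ → Euc n}
    {v w' : Euc n} (hγS : ∀ τ ∈ s, γ τ ∈ S) (hγ : HasDerivWithinAt γ v s t) (hv : v ∈ T (γ t))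
    (hw : HasDerivWithinAt w w' s t) (hs : UniqueDiffWithinAt ℝ s t) (ht : t ∈ s) :
    HasDerivWithinAt (fun τ => ‖(T (γ τ)).starProjection (w τ)‖ ^ 2)
      (2 * (⟪A (γ t) v ((T (γ t)).starProjection (w t)), w t⟫ +
        ⟪(T (γ t)).starProjection (w t), w'⟫)) s t := by
  obtain ⟨P, hPx, hPS⟩ := hsub.exists_contDiffAt_starProjection (hγS t ht)
  have hP : DifferentiableAt ℝ P (γ t) := hPx.differentiableAt (by simp)
  have hPγ : ∀ᶠ τ in 𝓝[s] t, P (γ τ) = (T (γ τ)).starProjection :=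
    (tendsto_nhdsWithin_iff.2 ⟨hγ.continuousWithinAt.tendsto,
      eventually_mem_nhdsWithin.mono hγS⟩).eventually hPS
  have hPt : P (γ t) = (T (γ t)).starProjection := hPγ.self_of_nhdsWithin ht
  set L := fderiv ℝ P (γ t) v
  have hM : HasDerivWithinAt (fun τ => P (γ τ)) L s t :=
    hP.hasFDerivAt.comp_hasDerivWithinAt t hγ
  have hproj : ∀ᶠ τ in 𝓝[s] t, IsStarProjection (P (γ τ)) :=
    hPγ.mono fun τ h => h ▸ isStarProjection_starProjection
  have hLsym := (hM.isSelfAdjoint_of_eventually hs ht (hproj.mono fun _ h => h.isSelfAdjoint))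
    |>.isSymmetric
  have hLoff :=
    hM.mul_mul_eq_zero_of_eventually hs ht (hproj.mono fun _ h => h.isIdempotentElem)
  rw [hPt] at hLoff
  set Q := (T (γ t)).starProjection
  have hQLQ : Q (L (Q (w t))) = 0 := congr($hLoff (w t))
  have hQQ : Q (Q (w t)) = Q (w t) :=
    Submodule.starProjection_eq_self_iff.2 (Submodule.starProjection_apply_mem _ _)
  refine ((hM.clm_apply hw).norm_sq.congr_of_eventuallyEq (hPγ.mono fun τ h => by simp [h])
    (by rw [hPt])).congr_deriv ?_
  have hQw' : ⟪Q (w t), Q w'⟫ = ⟪Q (w t), w'⟫ := by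
    rw [← Submodule.inner_starProjection_left_eq_right, hQQ]
  have hAval : A (γ t) v (Q (w t)) = L (Q (w t)) - Q (L (Q (w t))) :=
    hA.eq_fderiv_starProjection (hγS t ht) hP hPS hv (Submodule.starProjection_apply_mem _ _)
  rw [hPt, hAval, inner_add_right, inner_sub_left, hQLQ, hQw', inner_zero_left, sub_zero,
    show ⟪L (Q (w t)), w t⟫ = ⟪Q (w t), L (w t)⟫ from hLsym _ _]

lemma IsCSFOn.swap {p q : ℝ → Euc n} (h : IsCSFOn S T s p q) : IsCSFOn S T s q p :=
  fun t ht =>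
    let ⟨hp, hq, hne, hp', hq'⟩ := h t ht
    ⟨hq, hp, hne.symm, hq', hp'⟩

lemma IsCSFOn.hasDerivWithinAt_norm_conormalT_sq (hA : IsSecondFundamentalForm S T A)
    (hsub : IsSubmanifold n k S T) {p q : ℝ → Euc n} (hflow : IsCSFOn S T s p q)
    (hs : UniqueDiffWithinAt ℝ s t) (ht : t ∈ s) :
    HasDerivWithinAt (fun τ => ‖conormalT T (p τ) (q τ)‖ ^ 2)
      (2 * (‖p t - q t‖⁻¹ * (⟪conormalT T (p t) (q t), conormalT T (q t) (p t)⟫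
          - ‖conormalT T (p t) (q t)‖ ^ 2
          + (‖conormalT T (p t) (q t)‖ ^ 2 + ‖conormalT T (q t) (p t)‖ ^ 2)
            * ‖conormalT T (p t) (q t)‖ ^ 2)
        - ⟪A (p t) (conormalT T (p t) (q t)) (conormalT T (p t) (q t)),
            ‖p t - q t‖⁻¹ • (p t - q t)⟫)) s t := by
  obtain ⟨hpS, -, hne, hp, hq⟩ := hflow t ht
  have ha : conormalT T (p t) (q t) ∈ T (p t) := Submodule.starProjection_apply_mem _ _
  have key := hA.hasDerivWithinAt_norm_starProjection_sq hsub (fun τ hτ => (hflow τ hτ).1) hp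
    (neg_mem ha) ((hp.sub hq).normalize (sub_ne_zero.2 hne)) hs ht
  refine key.congr_deriv ?_
  set a := conormalT T (p t) (q t)
  set b := conormalT T (q t) (p t)
  set u := NormedSpace.normalize (p t - q t)
  have hua : ⟪u, a⟫ = ‖a‖ ^ 2 := real_inner_starProjection_self _ _
  have hub : ⟪u, b⟫ = -‖b‖ ^ 2 := by
    rw [show u = -NormedSpace.normalize (q t - p t) by
      rw [← NormedSpace.normalize_neg, neg_sub], inner_neg_left]
    exact congrArg Neg.neg (real_inner_starProjection_self _ _)
  change 2 * (⟪A (p t) (-a) a, u⟫ + ⟪a, ‖p t - q t‖⁻¹ • (-a - -b - ⟪u, -a - -b⟫ • u)⟫)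
    = 2 * (‖p t - q t‖⁻¹ * (⟪a, b⟫ - ‖a‖ ^ 2 + (‖a‖ ^ 2 + ‖b‖ ^ 2) * ‖a‖ ^ 2)
      - ⟪A (p t) a a, u⟫)
  rw [hA.neg_left hsub hpS ha ha]
  simp only [inner_neg_left, real_inner_smul_right, inner_sub_right, inner_neg_right,
    real_inner_comm u a, hua, hub, real_inner_self_eq_norm_sq]
  ring

end Submanifold

lemma uniqueDiffOn_csfDomain (Tm : ℝ≥0∞) : UniqueDiffOn ℝ (csfDomain Tm) := by
  rcases eq_or_ne Tm ⊤ with rfl | hTm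
  · convert uniqueDiffOn_Ici (0 : ℝ)
    ext t
    simp [csfDomain]
  · convert uniqueDiffOn_Ico (0 : ℝ) Tm.toReal
    ext t
    simp only [csfDomain, mem_ofPred_eq, mem_Ico, and_congr_right_iff]
    exact fun ht => ENNReal.ofReal_lt_iff_lt_toReal ht hTm

theorem chord_statement_6_general (n k : ℕ) (S : Set (Euc n)) (T : Euc n → Submodule ℝ (Euc n))
    (hsub : IsSubmanifold n k S T)
    (Tm : ℝ≥0∞) (p q : ℝ → Euc n) (hflow : IsCSFOn S T (csfDomain Tm) p q)
    (A : Euc n → Euc n → Euc n → Euc n)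
    (hA : ∀ x ∈ S, ∀ u v : Euc n, u ∈ T x → v ∈ T x →
      ∀ V : Euc n → Euc n, DifferentiableAt ℝ V x → (∀ y ∈ S, V y ∈ T y) → V x = v →
        A x u v = fderiv ℝ V x u - projSM (T x) (fderiv ℝ V x u)) :
    ∀ t ∈ csfDomain Tm,
      HasDerivWithinAt (fun s => ‖conormalT T (p s) (q s)‖ ^ 2 + ‖conormalT T (q s) (p s)‖ ^ 2)
        (2 * (-(‖p t - q t‖ / 2) *
              (2 * ‖conormalT T (p t) (q t) - conormalT T (q t) (p t)‖ ^ 2 / ‖p t - q t‖ ^ 2)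
            + ‖p t - q t‖⁻¹ *
              (‖conormalT T (p t) (q t)‖ ^ 2 + ‖conormalT T (q t) (p t)‖ ^ 2) ^ 2
            - ⟪A (p t) (conormalT T (p t) (q t)) (conormalT T (p t) (q t)),
                ‖p t - q t‖⁻¹ • (p t - q t)⟫
            - ⟪A (q t) (conormalT T (q t) (p t)) (conormalT T (q t) (p t)),
                ‖q t - p t‖⁻¹ • (q t - p t)⟫))
        (csfDomain Tm) t := by
  intro t ht
  have hs := uniqueDiffOn_csfDomain Tm t ht
  have hℓ : ‖p t - q t‖ ≠ 0 := norm_ne_zero_iff.2 (sub_ne_zero.2 (hflow t ht).2.2.1)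
  refine ((hflow.hasDerivWithinAt_norm_conormalT_sq hA hsub hs ht).add
    (hflow.swap.hasDerivWithinAt_norm_conormalT_sq hA hsub hs ht)).congr_deriv ?_
  rw [norm_sub_rev (q t), real_inner_comm (conormalT T (p t) (q t)), norm_sub_sq_real]
  field_simp
  ring

/-- **Evolution of `‖η^T‖²`.** Under the chord shortening flow,
`(1/2) d/dt ‖η^T‖² = -(ℓ/2)‖Δ^{1/2}η^T‖² + (1/ℓ)‖η^T‖⁴
  - ⟨A(η^T(p),η^T(p)), η(p)⟩ - ⟨A(η^T(q),η^T(q)), η(q)⟩`,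
where `‖Δ^{1/2}η^T‖² = 2|η^T(p) - η^T(q)|²/ℓ²`. -/
theorem chord_statement_6 (n k : ℕ) (S : Set (Euc n)) (T : Euc n → Submodule ℝ (Euc n))
    (hsub : IsSubmanifold n k S T) (hcpt : IsCompact S)
    (Tm : ℝ≥0∞) (p q : ℝ → Euc n) (hflow : IsCSFOn S T (csfDomain Tm) p q)
    (A : Euc n → Euc n → Euc n → Euc n)
    (hA : ∀ x ∈ S, ∀ u v : Euc n, u ∈ T x → v ∈ T x →
      ∀ V : Euc n → Euc n, DifferentiableAt ℝ V x → (∀ y ∈ S, V y ∈ T y) → V x = v →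
        A x u v = fderiv ℝ V x u - projSM (T x) (fderiv ℝ V x u)) :
    ∀ t ∈ csfDomain Tm,
      HasDerivWithinAt (fun s => ‖conormalT T (p s) (q s)‖ ^ 2 + ‖conormalT T (q s) (p s)‖ ^ 2)
        (2 * (-(‖p t - q t‖ / 2) *
              (2 * ‖conormalT T (p t) (q t) - conormalT T (q t) (p t)‖ ^ 2 / ‖p t - q t‖ ^ 2)
            + ‖p t - q t‖⁻¹ *
              (‖conormalT T (p t) (q t)‖ ^ 2 + ‖conormalT T (q t) (p t)‖ ^ 2) ^ 2
            - ⟪A (p t) (conormalT T (p t) (q t)) (conormalT T (p t) (q t)),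
                ‖p t - q t‖⁻¹ • (p t - q t)⟫
            - ⟪A (q t) (conormalT T (q t) (p t)) (conormalT T (q t) (p t)),
                ‖q t - p t‖⁻¹ • (q t - p t)⟫))
        (csfDomain Tm) t :=
  chord_statement_6_general n k S T hsub Tm p q hflow A hA
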